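/- If G is an outerplanar graph with maximum degree Δ ≥ 5, then the clique number of L^+(G) is at most Δ. -/

import Mathlib

open SimpleGraph

variable {V : Type*}

/-- Four distinct vertices forming a 4-cycle in `G`. -/
def IsC4 (G : SimpleGraph V) (a b c d : V) : Prop :=
  a ≠ b ∧ a ≠ c ∧ a ≠ d ∧ b ≠ c ∧ b ≠ d ∧ c ≠ d ∧
    G.Adj a b ∧ G.Adj b c ∧ G.Adj c d ∧ G.Adj d a

/-- A proper edge coloring of `G` in which every 4-cycle is rainbow. -/
def IsBColoring (G : SimpleGraph V) {α : Type*} (C : Sym2 V → α) : Prop :=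
  (∀ a b c : V, G.Adj a b → G.Adj a c → b ≠ c → C s(a, b) ≠ C s(a, c)) ∧
  (∀ a b c d : V, IsC4 G a b c d →
    C s(a, b) ≠ C s(b, c) ∧ C s(a, b) ≠ C s(c, d) ∧ C s(a, b) ≠ C s(d, a) ∧
    C s(b, c) ≠ C s(c, d) ∧ C s(b, c) ≠ C s(d, a) ∧ C s(c, d) ≠ C s(d, a))

/-- The minimum number of colors in a B-coloring of `G`. -/
noncomputable def qB (G : SimpleGraph V) : ℕ :=
  sInf {n | ∃ C : Sym2 V → Fin n, IsBColoring G C}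

/-- `e` and `f` are opposite edges of some 4-cycle of `G`. -/
def OppC4 (G : SimpleGraph V) (e f : Sym2 V) : Prop :=
  ∃ a b c d : V, IsC4 G a b c d ∧ e = s(a, b) ∧ f = s(c, d)

/-- Two edges (as unordered pairs) share no vertex. -/
def EdgeDisjoint (e f : Sym2 V) : Prop := ∀ v : V, v ∈ e → v ∉ f

/-- The graph `F(G)` on the edges of `G`: two vertex-disjoint edges are adjacent
iff they are opposite edges of a 4-cycle of `G`. -/
def Fgraph (G : SimpleGraph V) : SimpleGraph G.edgeSet :=
  SimpleGraph.fromRel fun e f =>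
    EdgeDisjoint (e : Sym2 V) (f : Sym2 V) ∧ OppC4 G (e : Sym2 V) (f : Sym2 V)

/-- The extended line graph `L⁺(G)`: edges of `G` are adjacent if they share an
endpoint or are opposite edges of a 4-cycle of `G`. -/
def Lplus (G : SimpleGraph V) : SimpleGraph G.edgeSet :=
  SimpleGraph.fromRel fun e f =>
    (∃ v : V, v ∈ (e : Sym2 V) ∧ v ∈ (f : Sym2 V)) ∨ OppC4 G (e : Sym2 V) (f : Sym2 V)

/-- `H` is a minor of `G`, via branch sets. -/
def HasMinor {W : Type*} (G : SimpleGraph V) (H : SimpleGraph W) : Prop :=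
  ∃ B : W → Set V,
    (∀ w, (G.induce (B w)).Connected) ∧
    (∀ w₁ w₂, w₁ ≠ w₂ → Disjoint (B w₁) (B w₂)) ∧
    (∀ w₁ w₂, H.Adj w₁ w₂ → ∃ v₁ ∈ B w₁, ∃ v₂ ∈ B w₂, G.Adj v₁ v₂)

/-- Planarity via Wagner's theorem: no `K₅` minor and no `K₃,₃` minor. -/
def IsPlanar (G : SimpleGraph V) : Prop :=
  ¬ HasMinor G (completeGraph (Fin 5)) ∧
    ¬ HasMinor G (completeBipartiteGraph (Fin 3) (Fin 3))

/-- Outerplanarity: no `K₄` minor and no `K₂,₃` minor. -/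
def IsOuterplanar (G : SimpleGraph V) : Prop :=
  ¬ HasMinor G (completeGraph (Fin 4)) ∧
    ¬ HasMinor G (completeBipartiteGraph (Fin 2) (Fin 3))

/-- `G` is 2-connected: at least 3 vertices and removing any vertex leaves it connected. -/
def IsTwoConnected (G : SimpleGraph V) : Prop :=
  3 ≤ Nat.card V ∧ ∀ v : V, (G.induce {u | u ≠ v}).Connected

/-- `K₄` minus one edge, on `Fin 4` (the edge between `2` and `3` removed). -/
def K4e : SimpleGraph (Fin 4) :=
  SimpleGraph.fromRel fun x y => s(x, y) ≠ s((2 : Fin 4), (3 : Fin 4))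

/-- The chromatic index: minimum number of colors in a proper edge coloring. -/
noncomputable def chromIndex (G : SimpleGraph V) : ℕ :=
  sInf {n | ∃ C : Sym2 V → Fin n,
    ∀ a b c : V, G.Adj a b → G.Adj a c → b ≠ c → C s(a, b) ≠ C s(a, c)}

/-- `K₆` minus a perfect matching, on `Fin 6` (the matching `01, 23, 45` removed). -/
def K6mM : SimpleGraph (Fin 6) :=
  SimpleGraph.fromRel fun x y => (x : ℕ) / 2 ≠ (y : ℕ) / 2

/-- A path `v₀v₁v₂v₃` together with a vertex `4` adjacent to all four path vertices. -/
def FanGraph : SimpleGraph (Fin 5) :=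
  SimpleGraph.fromRel fun x y =>
    ((x : ℕ) + 1 = (y : ℕ) ∧ (y : ℕ) ≤ 3) ∨ (x : ℕ) = 4



/-!
Let `K` be a clique of `L⁺(G)`. If its edges share a vertex `v`, then `|K| ≤ deg v ≤ Δ`; if they
pairwise meet without a common vertex, `K` is a triangle. Otherwise `K` contains disjoint edges
`ab`, `cd`, which are opposite on a 4-cycle `abcd`. Outerplanarity forbids a vertex off the cycle
adjacent to both `a` and `c` (or to both `b` and `d`) and an edge off the cycle opposite to both
`ab` and `cd` (each gives a `K₂,₃` minor), as well as the two chords `ac`, `bd` together (`K₄`).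
So an edge `aw` of `K` with `w` off the cycle is opposite to `cd` on the cycle `awdc`: it forces
the chord `ac` and the edge `wd`. Such a pendant edge is the only one in `K` and excludes `bc`
and `bd`, so `K ⊆ {ab, cd, da, ac, aw}`; without pendant edges, `K` consists of sides of the
cycle and at most one chord.
-/

theorem hasMinor_of_injective {W : Type*} {G : SimpleGraph V} {H : SimpleGraph W} (f : W → V)
    (hf : f.Injective) (hadj : ∀ ⦃x y⦄, H.Adj x y → G.Adj (f x) (f y)) : HasMinor G H :=
  ⟨fun w => {f w}, fun w => by simp [connected_top], fun x y hxy => by simp [hf.ne hxy],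
    fun x y h => ⟨f x, rfl, f y, rfl, hadj h⟩⟩

namespace IsC4

variable {G : SimpleGraph V} {a b c d w x : V}

theorem rotate (h : IsC4 G a b c d) : IsC4 G b c d a := by
  obtain ⟨hab, hac, had, hbc, hbd, hcd, h1, h2, h3, h4⟩ := h
  exact ⟨hbc, hbd, hab.symm, hcd, hac.symm, had.symm, h2, h3, h4, h1⟩

theorem reverse (h : IsC4 G a b c d) : IsC4 G d c b a := by
  obtain ⟨hab, hac, had, hbc, hbd, hcd, h1, h2, h3, h4⟩ := h
  exact ⟨hcd.symm, hbd.symm, had.symm, hbc.symm, hac.symm, hab.symm,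
    h3.symm, h2.symm, h1.symm, h4.symm⟩

theorem hasMinor_K4 (h : IsC4 G a b c d) (hac : G.Adj a c) (hbd : G.Adj b d) :
    HasMinor G (completeGraph (Fin 4)) := by
  refine hasMinor_of_injective ![a, b, c, d] ?_ ?_
  · intro i j hij
    fin_cases i <;> fin_cases j <;> simp at hij ⊢ <;> grind [IsC4]
  · intro i j hij
    fin_cases i <;> fin_cases j <;> simp at hij ⊢ <;> grind [IsC4, G.adj_symm]

/-- The branch sets are `{a}, {c}` on one side and `{b}, {d}, S` on the other. -/

theorem hasMinor_K23 (h : IsC4 G a b c d) {S : Set V} (hS : (G.induce S).Connected)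
    (haS : a ∉ S) (hbS : b ∉ S) (hcS : c ∉ S) (hdS : d ∉ S)
    (ha : ∃ x ∈ S, G.Adj a x) (hc : ∃ x ∈ S, G.Adj c x) :
    HasMinor G (completeBipartiteGraph (Fin 2) (Fin 3)) := by
  refine ⟨Sum.elim ![{a}, {c}] ![{b}, {d}, S], ?_, ?_, ?_⟩
  · rintro (i | j)
    · fin_cases i <;> simp [connected_top]
    · fin_cases j <;> simp [connected_top, hS]
  · rintro (i | j) (i' | j') hne <;>
      [(fin_cases i <;> fin_cases i'); (fin_cases i <;> fin_cases j');
       (fin_cases j <;> fin_cases i'); (fin_cases j <;> fin_cases j')] <;>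
      simp [Set.disjoint_left] at hne ⊢ <;> grind [IsC4]
  · rintro (i | j) (i' | j') hadj
    · simp at hadj
    · fin_cases i <;> fin_cases j' <;> simp <;> grind [IsC4, G.adj_symm]
    · fin_cases j <;> fin_cases i' <;> simp <;> grind [IsC4, G.adj_symm]
    · simp at hadj

theorem hasMinor_K23_of_common_adj (h : IsC4 G a b c d) (hwb : w ≠ b) (hwd : w ≠ d)
    (haw : G.Adj a w) (hcw : G.Adj c w) :
    HasMinor G (completeBipartiteGraph (Fin 2) (Fin 3)) :=
  h.hasMinor_K23 (S := {w}) (by simp [connected_top]) haw.ne (by simpa using hwb.symm)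
    hcw.ne (by simpa using hwd.symm) ⟨w, rfl, haw⟩ ⟨w, rfl, hcw⟩

theorem hasMinor_K23_of_edge (h : IsC4 G a b c d) (hwx : G.Adj w x)
    (hw : w ≠ a ∧ w ≠ b ∧ w ≠ c ∧ w ≠ d) (hx : x ≠ a ∧ x ≠ b ∧ x ≠ c ∧ x ≠ d)
    (ha : G.Adj a w ∨ G.Adj a x) (hc : G.Adj c w ∨ G.Adj c x) :
    HasMinor G (completeBipartiteGraph (Fin 2) (Fin 3)) := by
  refine h.hasMinor_K23 (S := {w, x}) (induce_pair_connected_of_adj hwx) ?_ ?_ ?_ ?_ ?_ ?_ <;>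
    simp only [Set.mem_insert_iff, Set.mem_singleton_iff, exists_eq_or_imp, exists_eq_left] <;>
    grind

end IsC4

section OppositeEdges

variable {G : SimpleGraph V} {a b c d w x u v : V}

theorem edgeDisjoint_mk_iff :
    EdgeDisjoint s(x, w) s(u, v) ↔ x ≠ u ∧ x ≠ v ∧ w ≠ u ∧ w ≠ v := by
  simp [EdgeDisjoint, and_assoc]

theorem OppC4.symm {e f : Sym2 V} (h : OppC4 G e f) : OppC4 G f e := by
  obtain ⟨a, b, c, d, hC, rfl, rfl⟩ := h
  exact ⟨c, d, a, b, hC.rotate.rotate, rfl, rfl⟩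

theorem OppC4.isC4_or_isC4 (h : OppC4 G s(x, w) s(u, v)) :
    IsC4 G x w u v ∨ IsC4 G x w v u := by
  obtain ⟨a, b, c, d, hC, he, hf⟩ := h
  rcases Sym2.eq_iff.mp he with ⟨rfl, rfl⟩ | ⟨rfl, rfl⟩ <;>
    rcases Sym2.eq_iff.mp hf with ⟨rfl, rfl⟩ | ⟨rfl, rfl⟩
  exacts [.inl hC, .inr hC, .inr hC.reverse.rotate.rotate, .inl hC.reverse.rotate.rotate]

/-- An edge `aw` opposite to `cd` closes either the 4-cycle `awcd`, making `w` a common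
neighbour of `a` and `c`, or the 4-cycle `awdc`. -/

theorem IsC4.adj_of_oppC4 (hC : IsC4 G a b c d)
    (hK23 : ¬ HasMinor G (completeBipartiteGraph (Fin 2) (Fin 3)))
    (hwb : w ≠ b) (h : OppC4 G s(a, w) s(c, d)) : G.Adj a c ∧ G.Adj w d := by
  rcases h.isC4_or_isC4 with
    ⟨-, -, -, -, hwd, -, haw, hwc, -, -⟩ | ⟨-, -, -, -, -, -, -, hwd, -, hca⟩
  · exact (hK23 (hC.hasMinor_K23_of_common_adj hwb hwd haw hwc.symm)).elim
  · exact ⟨hca.symm, hwd⟩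

theorem IsC4.hasMinor_K23_of_oppC4_oppC4 (hC : IsC4 G a b c d)
    (hab : OppC4 G s(w, x) s(a, b)) (hcd : OppC4 G s(w, x) s(c, d)) :
    HasMinor G (completeBipartiteGraph (Fin 2) (Fin 3)) := by
  rcases hab.isC4_or_isC4 with h₁ | h₁ <;> rcases hcd.isC4_or_isC4 with h₂ | h₂ <;>
    obtain ⟨_, _, _, _, _, _, hwx, hx₁, -, hw₁⟩ := h₁ <;>
    obtain ⟨_, _, _, _, _, _, -, hx₂, -, hw₂⟩ := h₂
  · exact hC.hasMinor_K23_of_common_adj (by grind) (by grind) hx₁.symm hx₂.symm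
  · exact hC.hasMinor_K23_of_edge hwx (by grind) (by grind) (.inr hx₁.symm) (.inl hw₂)
  · exact hC.rotate.hasMinor_K23_of_edge hwx (by grind) (by grind) (.inr hx₁.symm) (.inl hw₂)
  · exact hC.hasMinor_K23_of_common_adj (by grind) (by grind) hw₁ hw₂

end OppositeEdges

/-- Cliques of `L⁺(G)`, as sets of edges of `G`: edges sharing a vertex are adjacent in
`L⁺(G)` anyway, so only vertex-disjoint pairs are constrained. -/
def IsLplusClique (G : SimpleGraph V) (K : Finset (Sym2 V)) : Prop :=
  (∀ e ∈ K, e ∈ G.edgeSet) ∧ ∀ e ∈ K, ∀ f ∈ K, EdgeDisjoint e f → OppC4 G e f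

theorem SimpleGraph.IsClique.isLplusClique_map {G : SimpleGraph V} {s : Finset G.edgeSet}
    (hs : (Lplus G).IsClique (s : Set G.edgeSet)) :
    IsLplusClique G (s.map (Function.Embedding.subtype _)) := by
  refine ⟨fun e he => ?_, fun e he f hf hef => ?_⟩
  · obtain ⟨e, -, rfl⟩ := Finset.mem_map.mp he
    exact e.2
  obtain ⟨e, he', rfl⟩ := Finset.mem_map.mp he
  obtain ⟨f, hf', rfl⟩ := Finset.mem_map.mp hf
  have hne : e ≠ f := by
    rintro rfl
    obtain ⟨v, hv⟩ : ∃ v, v ∈ (e : Sym2 V) := ⟨_, Sym2.out_fst_mem _⟩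
    exact hef v hv hv
  have hadj := hs he' hf' hne
  simp only [Lplus, fromRel_adj] at hadj
  rcases hadj.2 with (⟨v, hve, hvf⟩ | h) | (⟨v, hvf, hve⟩ | h)
  · exact (hef v hve hvf).elim
  · exact h
  · exact (hef v hve hvf).elim
  · exact h.symm

namespace IsLplusClique

variable {G : SimpleGraph V} {K : Finset (Sym2 V)} {a b c d w y : V}

theorem adj (hK : IsLplusClique G K) (h : s(a, b) ∈ K) : G.Adj a b := hK.1 _ h

theorem adj_of_pendant (hK : IsLplusClique G K)
    (hK23 : ¬ HasMinor G (completeBipartiteGraph (Fin 2) (Fin 3))) (hC : IsC4 G a b c d)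
    (hcd : s(c, d) ∈ K) (haw : s(a, w) ∈ K) (hwb : w ≠ b) (hwc : w ≠ c) (hwd : w ≠ d) :
    G.Adj a c ∧ G.Adj w d := by
  have ⟨_, hac, had, _⟩ := hC
  exact hC.adj_of_oppC4 hK23 hwb (hK.2 _ haw _ hcd (edgeDisjoint_mk_iff.2 ⟨hac, had, hwc, hwd⟩))

theorem mem_cycle_or_pendant (hK : IsLplusClique G K)
    (hK23 : ¬ HasMinor G (completeBipartiteGraph (Fin 2) (Fin 3))) (hC : IsC4 G a b c d)
    (hab : s(a, b) ∈ K) (hcd : s(c, d) ∈ K) {g : Sym2 V} (hg : g ∈ K) :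
    (g = s(a, b) ∨ g = s(b, c) ∨ g = s(c, d) ∨ g = s(d, a) ∨ g = s(a, c) ∨ g = s(b, d)) ∨
      ∃ w, (w ≠ a ∧ w ≠ b ∧ w ≠ c ∧ w ≠ d) ∧
        (g = s(a, w) ∨ g = s(b, w) ∨ g = s(c, w) ∨ g = s(d, w)) := by
  induction g using Sym2.ind with
  | _ x y =>
  have hxy := (hK.adj hg).ne
  by_cases hx : x = a ∨ x = b ∨ x = c ∨ x = d <;> by_cases hy : y = a ∨ y = b ∨ y = c ∨ y = d
  · left
    rcases hx with rfl | rfl | rfl | rfl <;> rcases hy with rfl | rfl | rfl | rfl <;>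
      simp_all [Sym2.eq_swap]
  · right
    exact ⟨y, by simpa using hy, by rcases hx with rfl | rfl | rfl | rfl <;> simp⟩
  · right
    exact ⟨x, by simpa using hx, by rcases hy with rfl | rfl | rfl | rfl <;> simp [Sym2.eq_swap]⟩
  · push Not at hx hy
    exact (hK23 (hC.hasMinor_K23_of_oppC4_oppC4
      (hK.2 _ hg _ hab (edgeDisjoint_mk_iff.2 (by grind [IsC4])))
      (hK.2 _ hg _ hcd (edgeDisjoint_mk_iff.2 (by grind [IsC4]))))).elim

/-- Otherwise `{a, d}` and `{w}, {y}, {b, c}` are the sides of a `K₂,₃` minor. -/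

theorem eq_of_pendant_of_pendant (hK : IsLplusClique G K)
    (hK23 : ¬ HasMinor G (completeBipartiteGraph (Fin 2) (Fin 3))) (hC : IsC4 G a b c d)
    (hcd : s(c, d) ∈ K) (haw : s(a, w) ∈ K) (hwb : w ≠ b) (hwc : w ≠ c) (hwd : w ≠ d)
    (hay : s(a, y) ∈ K) (hyb : y ≠ b) (hyc : y ≠ c) (hyd : y ≠ d) : w = y := by
  by_contra hwy
  have hdw := (hK.adj_of_pendant hK23 hC hcd haw hwb hwc hwd).2.symm
  have hdy := (hK.adj_of_pendant hK23 hC hcd hay hyb hyc hyd).2.symm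
  have haw' := hK.adj haw
  have hay' := hK.adj hay
  have ⟨_, _, had, _, _, _, hab', hbc', hcd', _⟩ := hC
  have hC' : IsC4 G a w d y :=
    ⟨haw'.ne, had, hay'.ne, hwd, hwy, hdy.ne, haw', hdw.symm, hdy, hay'.symm⟩
  exact hK23 (hC'.hasMinor_K23_of_edge hbc' (by grind) (by grind) (.inl hab') (.inr hcd'.symm))

theorem not_mem_of_pendant (hK : IsLplusClique G K)
    (hK23 : ¬ HasMinor G (completeBipartiteGraph (Fin 2) (Fin 3))) (hC : IsC4 G a b c d)
    (hcd : s(c, d) ∈ K) (haw : s(a, w) ∈ K) (hwb : w ≠ b) (hwc : w ≠ c) (hwd : w ≠ d) :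
    s(b, c) ∉ K := by
  intro hbc
  have hdw := (hK.adj_of_pendant hK23 hC hcd haw hwb hwc hwd).2.symm
  have haw' := hK.adj haw
  have ⟨hab, hac, _, _, _, _⟩ := hC
  have hopp := hK.2 _ hbc _ haw (edgeDisjoint_mk_iff.2 ⟨hab.symm, hwb.symm, hac.symm, hwc.symm⟩)
  rcases hopp.isC4_or_isC4 with
    ⟨-, -, -, -, -, -, -, -, -, hwb'⟩ | ⟨-, -, -, -, -, -, -, hcw, -, -⟩
  · exact hK23 (hC.rotate.hasMinor_K23_of_common_adj hwc haw'.ne' hwb'.symm hdw)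
  · exact hK23 (hC.hasMinor_K23_of_common_adj hwb hwd haw' hcw)

theorem not_pendant_of_pendant (hK : IsLplusClique G K)
    (hK23 : ¬ HasMinor G (completeBipartiteGraph (Fin 2) (Fin 3))) (hC : IsC4 G a b c d)
    (hab : s(a, b) ∈ K) (hcd : s(c, d) ∈ K)
    (haw : s(a, w) ∈ K) (hwb : w ≠ b) (hwc : w ≠ c) (hwd : w ≠ d)
    (hcy : s(c, y) ∈ K) (hya : y ≠ a) (hyb : y ≠ b) (hyd : y ≠ d) : False := by
  have hdw := (hK.adj_of_pendant hK23 hC hcd haw hwb hwc hwd).2.symm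
  have hby := (hK.adj_of_pendant hK23 hC.rotate.rotate hab hcy hyd hya hyb).2.symm
  have haw' := hK.adj haw
  by_cases hwy : w = y
  · subst hwy
    exact hK23 (hC.rotate.hasMinor_K23_of_common_adj hwc haw'.ne' hby hdw)
  have ⟨_, hac, _, _, _, _⟩ := hC
  have hopp := hK.2 _ haw _ hcy (edgeDisjoint_mk_iff.2 ⟨hac, hya.symm, hwc, hwy⟩)
  rcases hopp.isC4_or_isC4 with
    ⟨-, -, -, -, -, -, -, hwc', -, -⟩ | ⟨-, -, -, -, -, -, -, hwy', -, -⟩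
  · exact hK23 (hC.hasMinor_K23_of_common_adj hwb hwd haw' hwc'.symm)
  · exact hK23 (hC.reverse.rotate.rotate.hasMinor_K23_of_edge hwy' ⟨hwb, haw'.ne', hwd, hwc⟩
      ⟨hyb, hya, hyd, (hK.adj hcy).ne'⟩ (.inr hby) (.inl hdw))

theorem card_le_five_of_pendant (hK : IsLplusClique G K) (hG : IsOuterplanar G)
    (hC : IsC4 G a b c d) (hab : s(a, b) ∈ K) (hcd : s(c, d) ∈ K)
    (haw : s(a, w) ∈ K) (hwb : w ≠ b) (hwc : w ≠ c) (hwd : w ≠ d) : K.card ≤ 5 := by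
  classical
  have hac := (hK.adj_of_pendant hG.2 hC hcd haw hwb hwc hwd).1
  have hbd : ¬ G.Adj b d := fun hbd => hG.1 (hC.hasMinor_K4 hac hbd)
  have hba : s(b, a) ∈ K := Sym2.eq_swap ▸ hab
  have hdc : s(d, c) ∈ K := Sym2.eq_swap ▸ hcd
  refine (Finset.card_le_card (t := {s(a, b), s(c, d), s(d, a), s(a, c), s(a, w)})
    fun g hg => ?_).trans Finset.card_le_five
  simp only [Finset.mem_insert, Finset.mem_singleton]
  rcases hK.mem_cycle_or_pendant hG.2 hC hab hcd hg with
    (rfl | rfl | rfl | rfl | rfl | rfl) | ⟨y, ⟨hya, hyb, hyc, hyd⟩, rfl | rfl | rfl | rfl⟩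
  · simp
  · exact (hK.not_mem_of_pendant hG.2 hC hcd haw hwb hwc hwd hg).elim
  · simp
  · simp
  · simp
  · exact (hbd (hK.adj hg)).elim
  · simp [hK.eq_of_pendant_of_pendant hG.2 hC hcd haw hwb hwc hwd hg hyb hyc hyd]
  · exact (hbd (hK.adj_of_pendant hG.2 hC.reverse.rotate.rotate hdc hg hya hyd hyc).1).elim
  · exact (hK.not_pendant_of_pendant hG.2 hC hab hcd haw hwb hwc hwd hg hya hyb hyd).elim
  · exact (hbd (hK.adj_of_pendant hG.2 hC.reverse hba hg hyc hyb hya).1.symm).elim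

theorem card_le_five (hK : IsLplusClique G K) (hG : IsOuterplanar G)
    (hC : IsC4 G a b c d) (hab : s(a, b) ∈ K) (hcd : s(c, d) ∈ K) : K.card ≤ 5 := by
  classical
  have hba : s(b, a) ∈ K := Sym2.eq_swap ▸ hab
  have hdc : s(d, c) ∈ K := Sym2.eq_swap ▸ hcd
  by_cases hp : ∃ w, (w ≠ a ∧ w ≠ b ∧ w ≠ c ∧ w ≠ d) ∧
      (s(a, w) ∈ K ∨ s(b, w) ∈ K ∨ s(c, w) ∈ K ∨ s(d, w) ∈ K)
  · obtain ⟨w, ⟨hwa, hwb, hwc, hwd⟩, hw | hw | hw | hw⟩ := hp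
    · exact hK.card_le_five_of_pendant hG hC hab hcd hw hwb hwc hwd
    · exact hK.card_le_five_of_pendant hG hC.reverse.rotate.rotate hba hdc hw hwa hwd hwc
    · exact hK.card_le_five_of_pendant hG hC.rotate.rotate hcd hab hw hwd hwa hwb
    · exact hK.card_le_five_of_pendant hG hC.reverse hdc hba hw hwc hwb hwa
  have hcycle : ∀ g ∈ K, g = s(a, b) ∨ g = s(b, c) ∨ g = s(c, d) ∨ g = s(d, a) ∨
      g = s(a, c) ∨ g = s(b, d) := fun g hg =>
    (hK.mem_cycle_or_pendant hG.2 hC hab hcd hg).resolve_right fun ⟨w, hw, hg'⟩ =>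
      hp ⟨w, hw, by rcases hg' with rfl | rfl | rfl | rfl <;> simp [hg]⟩
  by_cases hbd : s(b, d) ∈ K
  · have hac : s(a, c) ∉ K := fun hac => hG.1 (hC.hasMinor_K4 (hK.adj hac) (hK.adj hbd))
    refine (Finset.card_le_card (t := {s(a, b), s(b, c), s(c, d), s(d, a), s(b, d)})
      fun g hg => ?_).trans Finset.card_le_five
    rcases hcycle g hg with rfl | rfl | rfl | rfl | rfl | rfl <;> simp_all
  · refine (Finset.card_le_card (t := {s(a, b), s(b, c), s(c, d), s(d, a), s(a, c)})
      fun g hg => ?_).trans Finset.card_le_five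
    rcases hcycle g hg with rfl | rfl | rfl | rfl | rfl | rfl <;> simp_all

end IsLplusClique

theorem card_le_three_of_not_edgeDisjoint {K : Finset (Sym2 V)} (hK : ∀ e ∈ K, ¬ e.IsDiag)
    (hmeet : ∀ e ∈ K, ∀ f ∈ K, ¬ EdgeDisjoint e f) (hcommon : ¬ ∃ v, ∀ e ∈ K, v ∈ e) :
    K.card ≤ 3 := by
  classical
  simp only [EdgeDisjoint, not_forall, not_not, exists_prop] at hmeet
  push Not at hcommon
  obtain rfl | ⟨e, he⟩ := K.eq_empty_or_nonempty
  · simp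
  induction e using Sym2.ind with
  | _ x y =>
  obtain ⟨f, hf, hxf⟩ := hcommon x
  obtain ⟨z, rfl⟩ : ∃ z, f = s(y, z) := by
    obtain ⟨v, hv, hvf⟩ := hmeet _ he _ hf
    rcases Sym2.mem_iff.mp hv with rfl | rfl
    exacts [(hxf hvf).elim, Sym2.mem_iff_exists.mp hvf]
  obtain ⟨g, hg, hyg⟩ := hcommon y
  refine (Finset.card_le_card (t := {s(x, y), s(y, z), s(x, z)}) fun h hh => ?_).trans
    Finset.card_le_three
  -- `g` avoids `y` but meets `xy` and `yz`, so `g = xz`; an edge meeting all three sides of the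
  -- triangle `xyz` is one of them.
  have hg_xy := hmeet _ hg _ he
  have hg_yz := hmeet _ hg _ hf
  have hh_xy := hmeet _ hh _ he
  have hh_yz := hmeet _ hh _ hf
  have hh_g := hmeet _ hh _ hg
  have hxy := hK _ he
  have hyz := hK _ hf
  have hg_diag := hK _ hg
  have hh_diag := hK _ hh
  clear hmeet hcommon hK
  induction g using Sym2.ind
  induction h using Sym2.ind
  simp only [Sym2.mem_iff, Sym2.mk_isDiag_iff, exists_eq_or_imp, exists_eq_left,
    Finset.mem_insert, Finset.mem_singleton, Sym2.eq_iff] at *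
  grind

theorem SimpleGraph.card_le_degree_of_forall_mem {G : SimpleGraph V} [Fintype V]
    [DecidableRel G.Adj] {K : Finset (Sym2 V)} (hK : ∀ e ∈ K, e ∈ G.edgeSet) {v : V}
    (hv : ∀ e ∈ K, v ∈ e) : K.card ≤ G.degree v := by
  classical
  rw [← card_incidenceFinset_eq_degree]
  exact Finset.card_le_card fun e he => (G.mem_incidenceFinset v e).2 ⟨hK e he, hv e he⟩

theorem cliqueNum_Lplus_outerplanar_le_general {V : Type*} [Fintype V]
    (G : SimpleGraph V) [DecidableRel G.Adj] (hG : IsOuterplanar G)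
    (hΔ : 5 ≤ G.maxDegree) : (Lplus G).cliqueNum ≤ G.maxDegree := by
  obtain ⟨s, hs⟩ := (Lplus G).exists_isNClique_cliqueNum
  set K := s.map (Function.Embedding.subtype _)
  have hK : IsLplusClique G K := hs.isClique.isLplusClique_map
  rw [← hs.card_eq, ← Finset.card_map (Function.Embedding.subtype _)]
  by_cases hstar : ∃ v, ∀ e ∈ K, v ∈ e
  · obtain ⟨v, hv⟩ := hstar
    exact (card_le_degree_of_forall_mem hK.1 hv).trans (G.degree_le_maxDegree v)
  refine le_trans ?_ hΔ
  by_cases hdisj : ∃ e ∈ K, ∃ f ∈ K, EdgeDisjoint e f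
  · obtain ⟨e, he, f, hf, hef⟩ := hdisj
    obtain ⟨a, b, c, d, hC, rfl, rfl⟩ := hK.2 e he f hf hef
    exact hK.card_le_five hG hC he hf
  · push Not at hdisj
    exact (card_le_three_of_not_edgeDisjoint (fun e he => G.not_isDiag_of_mem_edgeSet (hK.1 e he))
      hdisj hstar).trans (by norm_num)

theorem cliqueNum_Lplus_outerplanar_le {V : Type*} [Fintype V] [DecidableEq V]
    (G : SimpleGraph V) [DecidableRel G.Adj] (hG : IsOuterplanar G)
    (hΔ : 5 ≤ G.maxDegree) : (Lplus G).cliqueNum ≤ G.maxDegree :=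
  cliqueNum_Lplus_outerplanar_le_general G hG hΔ
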